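/- arXiv:2310.17795 — 3 statements merged into one kernel-verified Lean document; each statement's English description precedes it below -/
import Mathlib

section
/- Let (T,X) be a rooted tree-decomposition of a graph G with X = (X_t : t ∈ V(T)), let T' be a subtree of T with X' = (X_t : t ∈ V(T')), and let G' = G[⋃_{t ∈ V(T')} X_t]. Let m,s,r,k,N be integers and let L be a hereditarily (T,X,m,s,r,k,N)-extendable list-assignment of G. Let L' be a list-assignment of G' such that L'(v) ⊇ L(v) for every v ∈ V(G') and 1_{L'} ∩ X_t = ∅ for every t ∈ V(T) − V(T'). If L' is (T',X',m,s,r,k)-legitimate, then L' is hereditarily (T',X',m,s,r,k,N)-extendable. -/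
open SimpleGraph

universe u v

/-- The data of a rooted tree-decomposition: a tree on the node type `ι`,
a root node, and a bag for each node. -/
structure RTD (V : Type u) (ι : Type v) where
  tree : SimpleGraph ι
  root : ι
  bag : ι → Set V

namespace RTD

variable {V : Type u} {ι : Type v}

/-- `t'` is a child of `t` in the rooted tree. -/
def IsChild (D : RTD V ι) (t t' : ι) : Prop :=
  D.tree.Adj t t' ∧ D.tree.dist D.root t' = D.tree.dist D.root t + 1

/-- `(D.tree, (D.bag t ∩ A : t))` is a (rooted) tree-decomposition of the induced
subgraph `G[A]`. -/
def IsTDOn (D : RTD V ι) (G : SimpleGraph V) (A : Set V) : Prop :=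
  D.tree.IsTree ∧
  (∀ v ∈ A, ∃ t, v ∈ D.bag t) ∧
  (∀ a b, a ∈ A → b ∈ A → G.Adj a b → ∃ t, a ∈ D.bag t ∧ b ∈ D.bag t) ∧
  (∀ v ∈ A, (D.tree.induce {t | v ∈ D.bag t}).Connected)

end RTD

/-- There is a walk of length at most `n` from `a` to `b` inside the induced
subgraph `G[A]` (i.e. `dist_{G[A]}(a,b) ≤ n`). -/
def DistLEIn {V : Type u} (G : SimpleGraph V) (A : Set V) (a b : V) (n : ℕ) : Prop :=
  ∃ w : G.Walk a b, w.length ≤ n ∧ ∀ v ∈ w.support, v ∈ A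

/-- `a` and `b` lie in a common monochromatic component of the coloring `c`
restricted to the set `S` of colored vertices. -/
def MonoReach {β : Type*} {α : Type*} (G : SimpleGraph β) (S : Set β) (c : β → α)
    (a b : β) : Prop :=
  ∃ w : G.Walk a b, ∀ v ∈ w.support, v ∈ S ∧ c v = c a

/-- `L` is a `(T, X ∩ A, m, s, r, k)`-legitimate list-assignment of the induced
subgraph `G[A]`:
(L1) every list has size `1` or `m`;
(L2) for every node `t`, the set of vertices of the bag at `t` with singleton lists
is `(s,r)`-centered in `G[A ∩ X_t]`;
(L3) the unique coloring determined by the singleton lists has weak diameter at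
most `k` in `G[A]`. -/
def LegitOn {V : Type u} {ι : Type v} (G : SimpleGraph V) (D : RTD V ι) (A : Set V)
    (L : V → Finset ℕ) (m s r k : ℕ) : Prop :=
  (∀ v ∈ A, (L v).card = 1 ∨ (L v).card = m) ∧
  (∀ t : ι, ∃ S : Set V, S ⊆ A ∩ D.bag t ∧ S.ncard ≤ s ∧
    ∀ z ∈ A ∩ D.bag t, (L z).card = 1 →
      ∃ x ∈ S, ∃ w : G.Walk z x, w.length ≤ r ∧ ∀ v ∈ w.support, v ∈ A ∩ D.bag t) ∧
  (∀ c : V → ℕ, (∀ v ∈ A, (L v).card = 1 → c v ∈ L v) →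
    ∀ a b : V, MonoReach G {v | v ∈ A ∧ (L v).card = 1} c a b → DistLEIn G A a b k)

/-- A child-extension at `t` of `G[A]` with respect to the rooted tree-decomposition
`(D.tree, (D.bag · ∩ A))`, with type `U` of new vertices: it is obtained from
`G[A ∩ X_t]` by adding the new vertices and new edges, each new edge joining two new
vertices belonging to the same child, or a new vertex belonging to a child `t'` and a
vertex of `X_t ∩ X_{t'}`, so that every component of the subgraph induced by the new
vertices has at most two vertices. -/
structure ChildExt {V : Type u} {ι : Type v} (G : SimpleGraph V) (D : RTD V ι)
    (A : Set V) (t : ι) (U : Type u) where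
  graph : SimpleGraph (↥(A ∩ D.bag t) ⊕ U)
  owner : U → ι
  base_adj : ∀ x y : ↥(A ∩ D.bag t),
    graph.Adj (Sum.inl x) (Sum.inl y) ↔ G.Adj (x : V) (y : V)
  owner_child : ∀ u : U, D.IsChild t (owner u)
  mixed_adj : ∀ (x : ↥(A ∩ D.bag t)) (u : U),
    graph.Adj (Sum.inl x) (Sum.inr u) → (x : V) ∈ D.bag (owner u)
  new_adj : ∀ u u' : U, graph.Adj (Sum.inr u) (Sum.inr u') → owner u = owner u'
  new_small : ∀ u₁ u₂ u₃ : U, graph.Adj (Sum.inr u₁) (Sum.inr u₂) →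
    graph.Adj (Sum.inr u₂) (Sum.inr u₃) → u₁ = u₃

/-- `L` is a `(T, X ∩ A, m, s, r, k, N)`-extendable list-assignment of `G[A]`:
(E1) it is legitimate, and (E2) for every node `t`, every child-extension at `t` and
every list-assignment of it agreeing with `L` on the bag at `t`, the child-extension
has a coloring from the lists with weak diameter at most `N` (in the child-extension). -/
def ExtOn {V : Type u} {ι : Type v} (G : SimpleGraph V) (D : RTD V ι) (A : Set V)
    (L : V → Finset ℕ) (m s r k N : ℕ) : Prop :=
  LegitOn G D A L m s r k ∧
  ∀ (t : ι) (U : Type u), Fintype U →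
    ∀ (E : ChildExt G D A t U) (Lt : (↥(A ∩ D.bag t) ⊕ U) → Finset ℕ),
      (∀ z, (Lt z).Nonempty) →
      (∀ x : ↥(A ∩ D.bag t), Lt (Sum.inl x) = L (x : V)) →
      ∃ c : (↥(A ∩ D.bag t) ⊕ U) → ℕ, (∀ z, c z ∈ Lt z) ∧
        ∀ a b, MonoReach E.graph Set.univ c a b → ∃ w : E.graph.Walk a b, w.length ≤ N

/-- `L` is a hereditarily `(T, X ∩ A, m, s, r, k, N)`-extendable list-assignment of
`G[A]`: (H1) it is legitimate, and (H2) for every induced subgraph `G[A']` of `G[A]`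
and every list-assignment `L'` with `L'(v) ⊇ L(v)`, if `L'` is legitimate for `G[A']`
then it is extendable for `G[A']`. -/
def HeredExtOn {V : Type u} {ι : Type v} (G : SimpleGraph V) (D : RTD V ι) (A : Set V)
    (L : V → Finset ℕ) (m s r k N : ℕ) : Prop :=
  LegitOn G D A L m s r k ∧
  ∀ A' : Set V, A' ⊆ A → ∀ L' : V → Finset ℕ, (∀ v ∈ A', L v ⊆ L' v) →
    LegitOn G D A' L' m s r k → ExtOn G D A' L' m s r k N

/-!
Every instance of (H2) for `(T', X')` is an instance of (H2) for `(T, X)`. Legitimacy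
transfers because the bags outside `T'` carry no singleton lists, and a child-extension
for `(T', X')` is one for `(T, X)` because a child in `T'` is a child in `T`: as `T` is a
tree and the root of `T'` is its node closest to the root of `T`, distances from the root
of `T` to nodes of `T'` exceed distances in `T'` by a constant.
-/

namespace SimpleGraph

variable {α : Type*} {T : SimpleGraph α}

lemma Walk.IsPath.append {a b c : α} {p : T.Walk a b} {q : T.Walk b c}
    (hp : p.IsPath) (hq : q.IsPath) (h : ∀ x ∈ p.support, x ∈ q.support → x = b) :
    (p.append q).IsPath := by
  have hq' := hq.support_nodup
  rw [← Walk.cons_tail_support, List.nodup_cons] at hq'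
  rw [Walk.isPath_def, Walk.support_append, List.nodup_append]
  refine ⟨hp.support_nodup, hq'.2, fun x hxp y hyq hxy => ?_⟩
  subst hxy
  have hxq : x ∈ q.support := List.mem_of_mem_tail hyq
  exact hq'.1 (h x hxp hxq ▸ hyq)

lemma IsAcyclic.length_eq_dist_of_isPath (hT : T.IsAcyclic) {a b : α} {p : T.Walk a b}
    (hp : p.IsPath) : p.length = T.dist a b := by
  obtain ⟨q, hq, hlen⟩ := p.reachable.exists_path_of_dist
  obtain rfl : p = q :=
    congrArg Subtype.val ((hT.subsingleton_path a b).elim ⟨p, hp⟩ ⟨q, hq⟩)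
  exact hlen

lemma IsAcyclic.dist_induce (hT : T.IsAcyclic) {J : Set α} {a b : J}
    (hab : (T.induce J).Reachable a b) : (T.induce J).dist a b = T.dist a b := by
  obtain ⟨p, hp, hlen⟩ := hab.exists_path_of_dist
  have h := hT.length_eq_dist_of_isPath (hp.map (f := (Embedding.induce J).toHom)
    Subtype.val_injective)
  rw [Walk.length_map] at h
  exact hlen ▸ h

lemma IsAcyclic.dist_eq_dist_add_dist_of_forall_dist_le (hT : T.IsAcyclic) {J : Set α}
    (hJ : (T.induce J).Connected) {r g x : α} (hr : T.Reachable r g) (hg : g ∈ J)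
    (hx : x ∈ J) (hmin : ∀ t ∈ J, T.dist r g ≤ T.dist r t) :
    T.dist r x = T.dist r g + T.dist g x := by
  classical
  obtain ⟨Q, hQ, hQlen⟩ := hr.exists_path_of_dist
  obtain ⟨P, hP, hPJ⟩ : ∃ P : T.Walk g x, P.IsPath ∧ ∀ y ∈ P.support, y ∈ J := by
    obtain ⟨P', hP', -⟩ := hJ.exists_path_of_dist ⟨g, hg⟩ ⟨x, hx⟩
    refine ⟨P'.map (Embedding.induce J).toHom, hP'.map Subtype.val_injective, fun y hy => ?_⟩
    have hy' : y ∈ (P'.map (Embedding.induce J).toHom).support := hy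
    rw [Walk.support_map] at hy'
    obtain ⟨y', -, rfl⟩ := List.mem_map.mp hy'
    exact y'.2
  have hQP : (Q.append P).IsPath := by
    refine hQ.append hP fun y hyQ hyP => ?_
    by_contra hyg
    have hcloser : T.dist r y < T.dist r g :=
      hQlen ▸ (dist_le _).trans_lt (Q.length_takeUntil_lt_length hyQ hyg)
    exact (hmin y (hPJ y hyP)).not_gt hcloser
  rw [← hT.length_eq_dist_of_isPath hQP, Walk.length_append, hQlen,
    hT.length_eq_dist_of_isPath hP]

end SimpleGraph

section Reindex

variable {V : Type u} {ι ι' : Type v} {G : SimpleGraph V} {D : RTD V ι} {D' : RTD V ι'}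
  {A : Set V} {L : V → Finset ℕ} {m s r k N : ℕ}

lemma RTD.IsChild.val_of_induce (hT : D.tree.IsTree) {J : Set ι}
    (hJ : (D.tree.induce J).Connected) {D' : RTD V J} (htree : D'.tree = D.tree.induce J)
    (hroot : ∀ t ∈ J, D.tree.dist D.root D'.root ≤ D.tree.dist D.root t) {t t' : J}
    (h : D'.IsChild t t') : D.IsChild t t' := by
  obtain ⟨hadj, hdist⟩ := h
  rw [htree] at hadj hdist
  rw [hT.isAcyclic.dist_induce (hJ _ _), hT.isAcyclic.dist_induce (hJ _ _)] at hdist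
  have hgate := fun x : J => hT.isAcyclic.dist_eq_dist_add_dist_of_forall_dist_le hJ
    (hT.connected _ _) D'.root.2 x.2 hroot
  exact ⟨hadj, by rw [hgate t, hgate t', hdist]; rfl⟩

lemma LegitOn.of_reindex (φ : ι' → ι) (hbag : ∀ t, D'.bag t = D.bag (φ t))
    (hsingle : ∀ t ∉ Set.range φ, ∀ v ∈ A ∩ D.bag t, (L v).card ≠ 1)
    (h : LegitOn G D' A L m s r k) : LegitOn G D A L m s r k := by
  obtain ⟨hcard, hcenter, hdiam⟩ := h
  refine ⟨hcard, fun t => ?_, hdiam⟩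
  by_cases ht : t ∈ Set.range φ
  · obtain ⟨t', rfl⟩ := ht
    simpa only [hbag] using hcenter t'
  · exact ⟨∅, Set.empty_subset _, by simp, fun z hz h1 => absurd h1 (hsingle t ht z hz)⟩

/-- A child-extension with respect to `D'` at `t` is literally one with respect to `D` at
`φ t`, once the bag field of `D'` is replaced by `D.bag ∘ φ`. -/
lemma ExtOn.of_reindex (φ : ι' → ι) (hbag : ∀ t, D'.bag t = D.bag (φ t))
    (hchild : ∀ t t', D'.IsChild t t' → D.IsChild (φ t) (φ t'))
    (hext : ExtOn G D A L m s r k N) (hleg : LegitOn G D' A L m s r k) :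
    ExtOn G D' A L m s r k N := by
  obtain ⟨tree', root', bag'⟩ := D'
  obtain rfl : bag' = fun t => D.bag (φ t) := funext hbag
  refine ⟨hleg, fun t U hU E Lt hLt hagree => ?_⟩
  exact hext.2 (φ t) U hU
    { E with
      owner := fun u => φ (E.owner u)
      owner_child := fun u => hchild _ _ (E.owner_child u)
      new_adj := fun u u' h => congrArg φ (E.new_adj u u' h) }
    Lt hLt hagree

end Reindex

theorem hereditarily_extendable_restricts_to_subtree_general
    {V : Type u} {ι : Type v}
    (G : SimpleGraph V) (D : RTD V ι) (hD : D.IsTDOn G Set.univ)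
    (J : Set ι) (hJconn : (D.tree.induce J).Connected)
    (root' : ι) (hroot'J : root' ∈ J)
    (hroot' : ∀ t ∈ J, D.tree.dist D.root root' ≤ D.tree.dist D.root t)
    (D' : RTD V ↥J)
    (hD'tree : D'.tree = D.tree.induce J)
    (hD'root : D'.root = ⟨root', hroot'J⟩)
    (hD'bag : ∀ t : ↥J, D'.bag t = D.bag (t : ι))
    (A' : Set V)
    (L : V → Finset ℕ)
    (m s r k N : ℕ)
    (hher : HeredExtOn G D Set.univ L m s r k N)
    (L' : V → Finset ℕ) (hL'ne : ∀ v ∈ A', (L' v).Nonempty)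
    (hsup : ∀ v ∈ A', L v ⊆ L' v)
    (hout : ∀ t : ι, t ∉ J → ∀ v ∈ D.bag t, v ∈ A' → (L' v).card ≠ 1)
    (hleg' : LegitOn G D' A' L' m s r k) :
    HeredExtOn G D' A' L' m s r k N := by
  refine ⟨hleg', fun A'' hA'' L'' hL'' hleg'' => ?_⟩
  have hsingle : ∀ t ∉ Set.range ((↑) : J → ι), ∀ v ∈ A'' ∩ D.bag t, (L'' v).card ≠ 1 := by
    rintro t ht v ⟨hvA'', hvt⟩
    have hpos := Finset.card_pos.mpr (hL'ne v (hA'' hvA''))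
    have hne := hout t (by simpa using ht) v hvt (hA'' hvA'')
    have hle := Finset.card_le_card (hL'' v hvA'')
    omega
  have hext : ExtOn G D A'' L'' m s r k N :=
    hher.2 A'' (Set.subset_univ _) L'' (fun v hv => (hsup v (hA'' hv)).trans (hL'' v hv))
      (hleg''.of_reindex _ hD'bag hsingle)
  have hroot : ∀ t ∈ J, D.tree.dist D.root D'.root ≤ D.tree.dist D.root t := by
    rw [hD'root]; exact hroot'
  exact hext.of_reindex _ hD'bag (fun _ _ => RTD.IsChild.val_of_induce hD.1 hJconn hD'tree hroot)
    hleg''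

/-- **Lemma.** Let `(T,X)` be a rooted tree-decomposition of `G`, let `T'` be a subtree
of `T` (given by the connected set `J` of nodes, rooted at its node `root'` closest to
the root of `T`), let `X' = (X_t : t ∈ J)` and `G' = G[⋃_{t ∈ J} X_t]`. If `L` is a
hereditarily `(T,X,m,s,r,k,N)`-extendable list-assignment of `G`, and `L'` is a
list-assignment of `G'` with `L'(v) ⊇ L(v)` for every vertex `v` of `G'` and with
`1_{L'} ∩ X_t = ∅` for every node `t ∈ V(T) − J`, and `L'` is
`(T',X',m,s,r,k)`-legitimate, then `L'` is hereditarily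
`(T',X',m,s,r,k,N)`-extendable. -/
theorem hereditarily_extendable_restricts_to_subtree
    {V : Type u} {ι : Type v} [Fintype V] [Fintype ι]
    (G : SimpleGraph V) (D : RTD V ι) (hD : D.IsTDOn G Set.univ)
    (J : Set ι) (hJconn : (D.tree.induce J).Connected)
    (root' : ι) (hroot'J : root' ∈ J)
    (hroot' : ∀ t ∈ J, D.tree.dist D.root root' ≤ D.tree.dist D.root t)
    (D' : RTD V ↥J)
    (hD'tree : D'.tree = D.tree.induce J)
    (hD'root : D'.root = ⟨root', hroot'J⟩)
    (hD'bag : ∀ t : ↥J, D'.bag t = D.bag (t : ι))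
    (A' : Set V) (hA' : A' = {v | ∃ t ∈ J, v ∈ D.bag t})
    (L : V → Finset ℕ) (hLne : ∀ x, (L x).Nonempty)
    (m s r k N : ℕ)
    (hher : HeredExtOn G D Set.univ L m s r k N)
    (L' : V → Finset ℕ) (hL'ne : ∀ v ∈ A', (L' v).Nonempty)
    (hsup : ∀ v ∈ A', L v ⊆ L' v)
    (hout : ∀ t : ι, t ∉ J → ∀ v ∈ D.bag t, v ∈ A' → (L' v).card ≠ 1)
    (hleg' : LegitOn G D' A' L' m s r k) :
    HeredExtOn G D' A' L' m s r k N :=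
  hereditarily_extendable_restricts_to_subtree_general G D hD J hJconn root' hroot'J hroot' D'
    hD'tree hD'root hD'bag A' L m s r k N hher L' hL'ne hsup hout hleg'
end

section
/- Let (T,X) be a rooted tree-decomposition of a graph G with X = (X_t : t ∈ V(T)), let e be an edge of T, let (T_e',X') be the truncation of (T,X) at e, and let G_e = G[⋃_{t ∈ V(T_e')} X'_t]. Let m,s,r,k,N be integers and let L be a hereditarily (T,X,m,s,r,k,N)-extendable list-assignment of G. Let L' be a list-assignment of G_e such that L'(v) ⊇ L(v) for every v ∈ V(G_e) and 1_{L'} ∩ X_t = ∅ for every t ∈ V(T) − V(T_e'). If L' is (T_e',X',m,s,r,k)-legitimate, then L' is hereditarily (T_e',X',m,s,r,k,N)-extendable. -/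
open SimpleGraph

universe u v

/-! The truncation `D'` maps to `D` by sending the new root to `p`: this map preserves
adjacency and shifts depths by the depth of `p`, so it sends children to children and each
bag of `D'` into the corresponding bag of `D`. Hence a child-extension with respect to `D'`
is one with respect to `D` at the image node: of `G[A'']` itself at a node of `J`, and of the
root bag `G[A'' ∩ X_p ∩ X_q]` at the new root. Since no bag `X_t` with `t ∉ J` contains a vertex
with a singleton list, the relevant list-assignments are legitimate for `D`, and hereditary
extendability of `L` supplies the colorings. -/

def WeakDiamLE {β α : Type*} (H : SimpleGraph β) (c : β → α) (N : ℕ) : Prop :=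
  ∀ a b, MonoReach H Set.univ c a b → ∃ w : H.Walk a b, w.length ≤ N

theorem WeakDiamLE.comp_iso_symm {β₁ β₂ α : Type*} {H₁ : SimpleGraph β₁}
    {H₂ : SimpleGraph β₂} {c : β₁ → α} {N : ℕ} (φ : H₁ ≃g H₂) (h : WeakDiamLE H₁ c N) :
    WeakDiamLE H₂ (c ∘ φ.symm) N := by
  rintro a b ⟨w, hw⟩
  have hmono : MonoReach H₁ Set.univ c (φ.symm a) (φ.symm b) := by
    refine ⟨w.map φ.symm.toHom, fun v hv => ?_⟩
    obtain ⟨x, hx, rfl⟩ := List.mem_map.mp (by simpa only [Walk.support_map] using hv)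
    exact ⟨trivial, (hw x hx).2⟩
  obtain ⟨w₁, hw₁⟩ := h _ _ hmono
  exact ⟨(w₁.map φ.toHom).copy (φ.apply_symm_apply a) (φ.apply_symm_apply b), by simpa using hw₁⟩

section Transfer

variable {V : Type u} {ι₁ ι₂ : Type*} {G : SimpleGraph V} {D₁ : RTD V ι₁} {D₂ : RTD V ι₂}
  {A : Set V} {L : V → Finset ℕ} {m s r k N : ℕ}

theorem RTD.IsChild.map {π : ι₂ → ι₁} (hadj : ∀ {a b}, D₂.tree.Adj a b → D₁.tree.Adj (π a) (π b))
    {d₀ : ℕ} (hdepth : ∀ t, D₂.tree.dist D₂.root t + d₀ = D₁.tree.dist D₁.root (π t))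
    {t c : ι₂} (h : D₂.IsChild t c) : D₁.IsChild (π t) (π c) :=
  ⟨hadj h.1, by have := hdepth t; have := hdepth c; have := h.2; omega⟩

theorem legitOn_of_forall_card_ne_one (hcard : ∀ v ∈ A, (L v).card = 1 ∨ (L v).card = m)
    (hno : ∀ v ∈ A, (L v).card ≠ 1) : LegitOn G D₁ A L m s r k := by
  refine ⟨hcard, fun t => ⟨∅, Set.empty_subset _, by simp, fun z hz h1 => ?_⟩, ?_⟩
  · exact absurd h1 (hno z hz.1)
  · rintro c - a b ⟨w, hw⟩
    exact absurd (hw a w.start_mem_support).1.2 (hno a (hw a w.start_mem_support).1.1)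

theorem LegitOn.of_bags (h : LegitOn G D₂ A L m s r k)
    (hbags : ∀ t₁, (∃ t₂, A ∩ D₂.bag t₂ = A ∩ D₁.bag t₁) ∨
      ∀ v ∈ A ∩ D₁.bag t₁, (L v).card ≠ 1) :
    LegitOn G D₁ A L m s r k := by
  refine ⟨h.1, fun t₁ => ?_, h.2.2⟩
  rcases hbags t₁ with ⟨t₂, hbag⟩ | hno
  · exact hbag ▸ h.2.1 t₂
  · exact ⟨∅, Set.empty_subset _, by simp, fun z hz h1 => absurd h1 (hno z hz)⟩

/-- A child-extension with respect to `D₂` at `t` is one with respect to `D₁` at `π t`. -/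
theorem ExtOn.of_nodeMap (π : ι₂ → ι₁) (hleg : LegitOn G D₂ A L m s r k)
    (hsim : ∀ t, ∃ A₁, ExtOn G D₁ A₁ L m s r k N ∧ A ∩ D₂.bag t = A₁ ∩ D₁.bag (π t))
    (hchild : ∀ t c, D₂.IsChild t c → D₁.IsChild (π t) (π c))
    (hbag : ∀ t, D₂.bag t ⊆ D₁.bag (π t)) :
    ExtOn G D₂ A L m s r k N := by
  refine ⟨hleg, fun t U _ E Lt hLt hagree => ?_⟩
  obtain ⟨A₁, hext, hS⟩ := hsim t
  let e : (↥(A ∩ D₂.bag t) ⊕ U) ≃ (↥(A₁ ∩ D₁.bag (π t)) ⊕ U) :=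
    (Equiv.setCongr hS).sumCongr (Equiv.refl U)
  let E₁ : ChildExt G D₁ A₁ (π t) U :=
    { graph := E.graph.comap e.symm
      owner := π ∘ E.owner
      base_adj := fun _ _ => E.base_adj _ _
      owner_child := fun u => hchild _ _ (E.owner_child u)
      mixed_adj := fun _ u h => hbag _ (E.mixed_adj _ u h)
      new_adj := fun u u' h => congrArg π (E.new_adj u u' h)
      new_small := fun _ _ _ => E.new_small _ _ _ }
  obtain ⟨c, hc, hdiam⟩ := hext.2 (π t) U ‹_› E₁ (Lt ∘ e.symm) (fun _ => hLt _)
    (fun _ => hagree _)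
  exact ⟨c ∘ e, fun z => by simpa using hc (e z),
    WeakDiamLE.comp_iso_symm (Iso.comap e.symm E.graph) hdiam⟩

end Transfer

theorem SimpleGraph.Connected.dist_eq_add_of_mem_support_geodesic {W : Type*}
    {H : SimpleGraph W} (hconn : H.Connected) {o q j x : W}
    (hj : H.dist o j = H.dist o q + H.dist q j) (w : H.Walk q j) (hw : w.length = H.dist q j)
    (hx : x ∈ w.support) : H.dist o x = H.dist o q + H.dist q x := by
  obtain ⟨w₁, w₂, rfl⟩ := Walk.mem_support_iff_exists_append.mp hx
  have h₁ := dist_le w₁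
  have h₂ := dist_le w₂
  have h₃ : H.dist q j ≤ H.dist q x + H.dist x j := hconn.dist_triangle
  have h₄ : H.dist o x ≤ H.dist o q + H.dist q x := hconn.dist_triangle
  have h₅ : H.dist o j ≤ H.dist o x + H.dist x j := hconn.dist_triangle
  rw [Walk.length_append] at hw
  omega

namespace RTD

variable {V : Type u} {ι : Type v}

/-- `D'` is the truncation of `D` at the tree edge `pq`, with node set `J` for the component
of `T - pq` containing `q`, and new root `none`. -/
structure IsTruncation (D : RTD V ι) (p q : ι) (J : Set ι) (hqJ : q ∈ J)
    (D' : RTD V (Option J)) : Prop where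
  adj_iff : ∀ a b : Option J, D'.tree.Adj a b ↔
    ((∃ x y : J, a = some x ∧ b = some y ∧ D.tree.Adj (x : ι) (y : ι)) ∨
      (a = none ∧ b = some ⟨q, hqJ⟩) ∨ (a = some ⟨q, hqJ⟩ ∧ b = none))
  root_eq : D'.root = none
  bag_none : D'.bag none = D.bag p ∩ D.bag q
  bag_some : ∀ t : J, D'.bag (some t) = D.bag t

def truncNode {J : Set ι} (p : ι) (o : Option J) : ι :=
  o.elim p (↑)

variable {D : RTD V ι} {p q : ι} {J : Set ι} {hqJ : q ∈ J} {D' : RTD V (Option J)}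

theorem IsTruncation.adj_truncNode (hT : D.IsTruncation p q J hqJ D') (hpq : D.tree.Adj p q)
    {a b : Option J} (hab : D'.tree.Adj a b) :
    D.tree.Adj (truncNode p a) (truncNode p b) := by
  rcases (hT.adj_iff a b).mp hab with ⟨x, y, rfl, rfl, h⟩ | ⟨rfl, rfl⟩ | ⟨rfl, rfl⟩
  · exact h
  · exact hpq
  · exact hpq.symm

theorem IsTruncation.bag_subset (hT : D.IsTruncation p q J hqJ D') (o : Option J) :
    D'.bag o ⊆ D.bag (truncNode p o) := by
  cases o with
  | none => exact hT.bag_none ▸ Set.inter_subset_left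
  | some t => exact (hT.bag_some t).le

/-- Geodesics of `D` from `q` into `J` stay inside `J`, so they lift to the truncation;
conversely, walks of the truncation project to walks of `D` from `p`. -/
theorem IsTruncation.depth_add (hT : D.IsTruncation p q J hqJ D') (hconn : D.tree.Connected)
    (hpq : D.tree.Adj p q) (hq : D.tree.dist D.root q = D.tree.dist D.root p + 1)
    (hJ : J = {t | D.tree.dist D.root t = D.tree.dist D.root q + D.tree.dist q t})
    (o : Option J) :
    D'.tree.dist D'.root o + D.tree.dist D.root p = D.tree.dist D.root (truncNode p o) := by
  rw [hT.root_eq]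
  obtain _ | ⟨j, hj⟩ := o
  · simp [truncNode]
  have hjq : D.tree.dist D.root j = D.tree.dist D.root q + D.tree.dist q j := by
    rw [hJ] at hj; exact hj
  obtain ⟨w, hw⟩ := hconn.exists_walk_length_eq_dist q j
  have hwJ : ∀ x ∈ w.support, x ∈ J := fun x hx => by
    rw [hJ]; exact hconn.dist_eq_add_of_mem_support_geodesic hjq w hw hx
  let lift : D.tree.induce J →g D'.tree :=
    ⟨some, fun h => (hT.adj_iff _ _).mpr (Or.inl ⟨_, _, rfl, rfl, h⟩)⟩
  let w' : D'.tree.Walk none (some ⟨j, hj⟩) :=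
    .cons ((hT.adj_iff _ _).mpr (Or.inr (Or.inl ⟨rfl, rfl⟩))) ((w.induce J hwJ).map lift)
  have hw' : w'.length = D.tree.dist q j + 1 := by
    have := congrArg Walk.length (w.map_induce hwJ)
    rw [Walk.length_map] at this
    simp [w', this, hw]
  obtain ⟨g, hg⟩ := w'.reachable.exists_walk_length_eq_dist
  have hpj : D.tree.dist p j ≤ g.length :=
    (dist_le (g.map ⟨truncNode p, hT.adj_truncNode hpq⟩)).trans_eq (Walk.length_map _ _)
  have hle : D'.tree.dist none (some ⟨j, hj⟩) ≤ D.tree.dist q j + 1 := hw' ▸ dist_le w'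
  have htri : D.tree.dist D.root j ≤ D.tree.dist D.root p + D.tree.dist p j :=
    hconn.dist_triangle
  simp only [truncNode, Option.elim]
  omega

end RTD

/-- `J`, the set of nodes whose path to the root passes through `q`, is the node set of `T_e`;
the new root of the truncation `D'` is `none`. -/
theorem hereditarily_extendable_restricts_to_truncation_general
    {V : Type u} {ι : Type v}
    (G : SimpleGraph V) (D : RTD V ι) (hD : D.IsTDOn G Set.univ)
    (p q : ι) (hpq : D.tree.Adj p q)
    (hq : D.tree.dist D.root q = D.tree.dist D.root p + 1)
    (J : Set ι)
    (hJ : J = {t | D.tree.dist D.root t = D.tree.dist D.root q + D.tree.dist q t})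
    (hqJ : q ∈ J)
    (D' : RTD V (Option ↥J))
    (hD'tree : ∀ a b : Option ↥J, D'.tree.Adj a b ↔
      ((∃ x y : ↥J, a = some x ∧ b = some y ∧ D.tree.Adj (x : ι) (y : ι)) ∨
        (a = none ∧ b = some ⟨q, hqJ⟩) ∨ (a = some ⟨q, hqJ⟩ ∧ b = none)))
    (hD'root : D'.root = none)
    (hD'bagroot : D'.bag none = D.bag p ∩ D.bag q)
    (hD'bag : ∀ t : ↥J, D'.bag (some t) = D.bag (t : ι))
    (A' : Set V)
    (L : V → Finset ℕ)
    (m s r k N : ℕ)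
    (hher : HeredExtOn G D Set.univ L m s r k N)
    (L' : V → Finset ℕ) (hL'ne : ∀ v ∈ A', (L' v).Nonempty)
    (hsup : ∀ v ∈ A', L v ⊆ L' v)
    (hout : ∀ t : ι, t ∉ J → ∀ v ∈ D.bag t, v ∈ A' → (L' v).card ≠ 1)
    (hleg' : LegitOn G D' A' L' m s r k) :
    HeredExtOn G D' A' L' m s r k N := by
  have hT : D.IsTruncation p q J hqJ D' := ⟨hD'tree, hD'root, hD'bagroot, hD'bag⟩
  have hpJ : p ∉ J := by
    rw [hJ]; intro hp; have := hp.symm; omega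
  refine ⟨hleg', fun A'' hA'' L'' hL'' hleg'' => ?_⟩
  have hL : ∀ v ∈ A'', L v ⊆ L'' v := fun v hv => (hsup v (hA'' hv)).trans (hL'' v hv)
  have hno : ∀ t ∉ J, ∀ v ∈ A'' ∩ D.bag t, (L'' v).card ≠ 1 := by
    rintro t ht v ⟨hv, hvt⟩
    have := hout t ht v hvt (hA'' hv)
    have := (hL'ne v (hA'' hv)).card_pos
    have := Finset.card_le_card (hL'' v hv)
    omega
  refine ExtOn.of_nodeMap (RTD.truncNode p) hleg'' ?_
    (fun t c => RTD.IsChild.map (hT.adj_truncNode hpq)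
      (hT.depth_add hD.1.connected hpq hq hJ))
    hT.bag_subset
  rintro (_ | j)
  · refine ⟨A'' ∩ D'.bag none, hher.2 _ (Set.subset_univ _) L'' (fun v hv => hL v hv.1)
      (legitOn_of_forall_card_ne_one (fun v hv => hleg''.1 v hv.1) fun v hv => ?_), ?_⟩
    · exact hno p hpJ v ⟨hv.1, hT.bag_subset none hv.2⟩
    · rw [Set.inter_assoc, Set.inter_eq_left.mpr (hT.bag_subset none)]
  · refine ⟨A'', hher.2 A'' (Set.subset_univ _) L'' hL (hleg''.of_bags fun t => ?_), ?_⟩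
    · by_cases ht : t ∈ J
      · exact Or.inl ⟨some ⟨t, ht⟩, by rw [hD'bag]⟩
      · exact Or.inr (hno t ht)
    · rw [hD'bag]; rfl

/-- **Lemma.** Let `(T,X)` be a rooted tree-decomposition of `G`, let `e = pq` be an
edge of `T` (with `q` the end of `e` further from the root), let `J` be the node set of
the component `T_e` of `T − e` disjoint from the root (equivalently, the set of nodes
whose path to the root passes through `q`), and let `(T_e', X')` be the truncation of
`(T,X)` at `e`: `T_e'` is obtained from `T_e` by adding a new root (encoded `none`)
adjacent to `q`, with bag `X_p ∩ X_q`, all other bags unchanged. Let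
`G_e = G[⋃_{t ∈ J} X_t]`. If `L` is a hereditarily `(T,X,m,s,r,k,N)`-extendable
list-assignment of `G`, and `L'` is a list-assignment of `G_e` with `L'(v) ⊇ L(v)` for
every vertex `v` of `G_e` and with `1_{L'} ∩ X_t = ∅` for every `t ∈ V(T) − V(T_e')`,
and `L'` is `(T_e',X',m,s,r,k)`-legitimate, then `L'` is hereditarily
`(T_e',X',m,s,r,k,N)`-extendable. -/
theorem hereditarily_extendable_restricts_to_truncation
    {V : Type u} {ι : Type v} [Fintype V] [Fintype ι]
    (G : SimpleGraph V) (D : RTD V ι) (hD : D.IsTDOn G Set.univ)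
    (p q : ι) (hpq : D.tree.Adj p q)
    (hq : D.tree.dist D.root q = D.tree.dist D.root p + 1)
    (J : Set ι)
    (hJ : J = {t | D.tree.dist D.root t = D.tree.dist D.root q + D.tree.dist q t})
    (hqJ : q ∈ J)
    (D' : RTD V (Option ↥J))
    (hD'tree : ∀ a b : Option ↥J, D'.tree.Adj a b ↔
      ((∃ x y : ↥J, a = some x ∧ b = some y ∧ D.tree.Adj (x : ι) (y : ι)) ∨
        (a = none ∧ b = some ⟨q, hqJ⟩) ∨ (a = some ⟨q, hqJ⟩ ∧ b = none)))
    (hD'root : D'.root = none)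
    (hD'bagroot : D'.bag none = D.bag p ∩ D.bag q)
    (hD'bag : ∀ t : ↥J, D'.bag (some t) = D.bag (t : ι))
    (A' : Set V) (hA' : A' = {v | ∃ t ∈ J, v ∈ D.bag t})
    (L : V → Finset ℕ) (hLne : ∀ x, (L x).Nonempty)
    (m s r k N : ℕ)
    (hher : HeredExtOn G D Set.univ L m s r k N)
    (L' : V → Finset ℕ) (hL'ne : ∀ v ∈ A', (L' v).Nonempty)
    (hsup : ∀ v ∈ A', L v ⊆ L' v)
    (hout : ∀ t : ι, t ∉ J → ∀ v ∈ D.bag t, v ∈ A' → (L' v).card ≠ 1)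
    (hleg' : LegitOn G D' A' L' m s r k) :
    HeredExtOn G D' A' L' m s r k N :=
  hereditarily_extendable_restricts_to_truncation_general G D hD p q hpq hq J hJ hqJ D' hD'tree
    hD'root hD'bagroot hD'bag A' L m s r k N hher L' hL'ne hsup hout hleg'
end

section
/- Let d, g, p, k be positive integers with p ≥ 3k^{k+1} and g ≥ 4. If there exists a d-regular graph with girth at least g and chromatic number at least p, then there exist a bipartite graph G with maximum degree at most d·k^k and a k-list-assignment L of G such that every L-coloring of G has a monochromatic component whose vertex set has weak diameter in G greater than 2·⌊g/4⌋ − 3. -/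
/-!
Let `U = {0, …, 2k-2}`. Take the bipartite double cover of `H` and blow every vertex up into one
vertex per `k`-subset `A` of `U`, with list `A`. In a list coloring, each copy of a vertex `u` of
`H` sees at least `k` of the `2k - 1` colors, so the two copies of `u` see a common color `ψ u`.
As `χ(H) > 2(2k - 1)`, the edges of `H` inside the classes of `ψ` do not form a forest, so some
class contains a cycle of `H`, of length at least `g`; its first `⌊g/2⌋` steps reach a vertex at
distance `⌊g/2⌋` in `H`. Lifting this arc alternately through the two copies, on vertices of
color `ψ`, gives a monochromatic walk, and projecting to `H` does not shrink distances.
-/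

open SimpleGraph Finset

def MaxDegreeLE {V : Type*} (G : SimpleGraph V) (Δ : ℕ) : Prop :=
  ∀ v, (G.neighborSet v).ncard ≤ Δ

namespace Finset

variable {α : Type*} [DecidableEq α]

theorem card_lt_card_add_of_forall_not_disjoint {U T : Finset α} {k : ℕ}
    (h : ∀ A ∈ U.powersetCard k, ¬ Disjoint A T) : #U < #T + k := by
  by_contra! hle
  obtain ⟨B, hBU, hB⟩ := exists_subset_card_eq (n := k) (s := U \ T)
    (by have := card_le_card_sdiff_add_card (s := U) (t := T); omega)
  exact h B (mem_powersetCard.mpr ⟨hBU.trans sdiff_subset, hB⟩)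
    (disjoint_of_subset_left hBU sdiff_disjoint)

theorem exists_common_value_of_mem {U : Finset α} {k : ℕ} (hU : 2 * k ≤ #U + 1)
    (f₁ f₂ : U.powersetCard k → α) (hf₁ : ∀ A, f₁ A ∈ A.1) (hf₂ : ∀ A, f₂ A ∈ A.1) :
    ∃ γ ∈ U, ∃ A₁ A₂, f₁ A₁ = γ ∧ f₂ A₂ = γ := by
  have large_image : ∀ f : U.powersetCard k → α, (∀ A, f A ∈ A.1) →
      univ.image f ⊆ U ∧ #U < #(univ.image f) + k := fun f hf =>
    ⟨fun γ hγ => by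
      obtain ⟨A, -, rfl⟩ := mem_image.mp hγ
      exact (mem_powersetCard.mp A.2).1 (hf A),
    card_lt_card_add_of_forall_not_disjoint fun A hA =>
      not_disjoint_iff.mpr ⟨f ⟨A, hA⟩, hf ⟨A, hA⟩, mem_image_of_mem f (mem_univ _)⟩⟩
  obtain ⟨hsub₁, hcard₁⟩ := large_image f₁ hf₁
  obtain ⟨hsub₂, hcard₂⟩ := large_image f₂ hf₂
  obtain ⟨γ, hγ⟩ := inter_nonempty_of_card_lt_card_add_card hsub₁ hsub₂ (by omega)
  obtain ⟨hγ₁, hγ₂⟩ := mem_inter.mp hγ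
  obtain ⟨A₁, -, hA₁⟩ := mem_image.mp hγ₁
  obtain ⟨A₂, -, hA₂⟩ := mem_image.mp hγ₂
  exact ⟨γ, hsub₁ hγ₁, A₁, A₂, hA₁, hA₂⟩

end Finset

namespace Nat

theorem choose_two_mul_sub_one_le_pow_self (k : ℕ) : (2 * k - 1).choose k ≤ k ^ k := by
  rcases Nat.lt_or_ge k 4 with hk | hk
  · interval_cases k <;> decide
  obtain ⟨n, rfl⟩ : ∃ n, k = n + 1 := ⟨k - 1, by omega⟩
  calc (2 * (n + 1) - 1).choose (n + 1) = (2 * n + 1).choose n := by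
        rw [show 2 * (n + 1) - 1 = 2 * n + 1 by omega, Nat.choose_symm_half]
    _ ≤ 4 ^ n := Nat.choose_middle_le_pow n
    _ ≤ (n + 1) ^ (n + 1) :=
        (Nat.pow_le_pow_right (by omega) (by omega)).trans (Nat.pow_le_pow_left hk _)

theorem two_mul_sub_one_mul_two_lt (k : ℕ) (hk : 0 < k) :
    (2 * k - 1) * 2 < 3 * k ^ (k + 1) := by
  rcases Nat.lt_or_ge k 2 with h | h
  · interval_cases k
    norm_num
  have hsq : k * k ≤ k ^ (k + 1) := by
    rw [← sq]
    exact Nat.pow_le_pow_right hk (by omega)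
  have : 2 * k ≤ k * k := Nat.mul_le_mul_right k h
  omega

end Nat

namespace SimpleGraph

variable {V W ι S : Type*}

theorem Colorable.sup {G₁ G₂ : SimpleGraph V} {m n : ℕ} (h₁ : G₁.Colorable m)
    (h₂ : G₂.Colorable n) : (G₁ ⊔ G₂).Colorable (m * n) := by
  obtain ⟨C₁⟩ := h₁
  obtain ⟨C₂⟩ := h₂
  let C : (G₁ ⊔ G₂).Coloring (Fin m × Fin n) := Coloring.mk (fun v => (C₁ v, C₂ v)) <| by
    rintro u v (h | h) huv
    · exact C₁.valid h (congrArg Prod.fst huv)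
    · exact C₂.valid h (congrArg Prod.snd huv)
  simpa using C.colorable

theorem Walk.apply_eq_of_mem_support {G : SimpleGraph V} {f : V → ι}
    (hf : ∀ ⦃u v⦄, G.Adj u v → f u = f v) {u w x : V} (p : G.Walk u w) (hx : x ∈ p.support) :
    f x = f u := by
  induction p with
  | nil => rw [List.mem_singleton.mp hx]
  | cons h p ih =>
    rcases List.mem_cons.mp hx with rfl | hx
    · rfl
    · exact (ih hx).trans (hf h).symm

/-- If `H \ K` were a forest, pairs (`ψ`, a `2`-coloring of `H \ K`) would color
`H ≤ K ⊔ H \ K`. -/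
theorem exists_isCycle_forall_apply_eq [Fintype ι] {H : SimpleGraph V} (ψ : V → ι)
    (hH : ¬ H.Colorable (Fintype.card ι * 2)) :
    ∃ (x : V) (c : H.Walk x x), c.IsCycle ∧ ∀ v ∈ c.support, ψ v = ψ x := by
  set K : SimpleGraph V := (⊤ : SimpleGraph ι).comap ψ
  have hK : K.Colorable (Fintype.card ι) := (Coloring.mk ψ fun h => h).colorable
  have hcyc : ¬ (H \ K).IsAcyclic := fun hac =>
    hH <| (hK.sup hac.colorable_two).mono_left le_sup_sdiff
  simp only [IsAcyclic, not_forall, not_not] at hcyc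
  obtain ⟨x, c, hc⟩ := hcyc
  refine ⟨x, c.mapLe sdiff_le, hc.mapLe sdiff_le, fun v hv => ?_⟩
  rw [Walk.support_mapLe_eq_support] at hv
  exact c.apply_eq_of_mem_support (fun u v (huv : (H \ K).Adj u v) => not_not.mp huv.2) hv

/-- A geodesic shorter than the arc would form, together with the arc, a cycle of length
less than `2t`. -/
theorem Walk.IsCycle.le_dist_getVert {G : SimpleGraph V} {x : V} {c : G.Walk x x}
    (hc : c.IsCycle) {t : ℕ} (ht : 2 * t ≤ G.girth) : t ≤ G.dist x (c.getVert t) := by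
  have hlen : 2 * t ≤ c.length := ht.trans (girth_le_length hc)
  have htlt : t < c.length := by have := hc.three_le_length; omega
  by_contra! hlt
  obtain ⟨p, hp, hpd⟩ := Reachable.exists_path_of_dist ⟨c.take t⟩
  have hne : p ≠ c.take t := fun h => by
    have := congrArg Walk.length h
    rw [Walk.take_length] at this
    omega
  obtain ⟨_, -, -, c', hc', hlen'⟩ :=
    hp.exists_isCycle_length_le_add_of_ne (hc.isPath_take htlt) hne
  have := ht.trans (girth_le_length hc')
  rw [Walk.take_length] at hlen'
  omega

theorem Reachable.dist_map_le {G : SimpleGraph V} {G' : SimpleGraph W} (f : G →g G')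
    {u v : V} (h : G.Reachable u v) : G'.dist (f u) (f v) ≤ G.dist u v := by
  obtain ⟨p, hp⟩ := h.exists_walk_length_eq_dist
  simpa [hp] using dist_le (p.map f)

def bipartiteDoubleCoverProj (G : SimpleGraph V) : G.bipartiteDoubleCover →g G where
  toFun := Sum.elim id id
  map_rel' := by rintro (u | u) (v | v) h <;> simp_all

section BipartiteDoubleCover

variable {G : SimpleGraph V}

theorem ncard_neighborSet_bipartiteDoubleCover (v : V ⊕ V) :
    (G.bipartiteDoubleCover.neighborSet v).ncard =
      (G.neighborSet (G.bipartiteDoubleCoverProj v)).ncard := by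
  rcases v with v | v
  · have : G.bipartiteDoubleCover.neighborSet (.inl v) = Sum.inr '' G.neighborSet v := by
      ext (w | w) <;> simp
    rw [this, Set.ncard_image_of_injective _ Sum.inr_injective]
    rfl
  · have : G.bipartiteDoubleCover.neighborSet (.inr v) = Sum.inl '' G.neighborSet v := by
      ext (w | w) <;> simp
    rw [this, Set.ncard_image_of_injective _ Sum.inl_injective]
    rfl

theorem Walk.exists_lift_bipartiteDoubleCover {a b : V} (q : G.Walk a b) (v : V ⊕ V)
    (hv : G.bipartiteDoubleCoverProj v = a) :
    ∃ (v' : V ⊕ V) (r : G.bipartiteDoubleCover.Walk v v'), G.bipartiteDoubleCoverProj v' = b ∧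
      ∀ z ∈ r.support, G.bipartiteDoubleCoverProj z ∈ q.support := by
  induction q generalizing v with
  | nil => exact ⟨v, .nil, hv, by simpa using hv⟩
  | @cons a y b h q ih =>
    let w : V ⊕ V := v.elim (fun _ => .inr y) (fun _ => .inl y)
    have hadj : G.bipartiteDoubleCover.Adj v w := by
      rcases v with v | v <;> obtain rfl : v = a := hv <;> exact h
    obtain ⟨v', r, hv', hr⟩ := ih w (by cases v <;> rfl)
    refine ⟨v', .cons hadj r, hv', fun z hz => ?_⟩
    rw [Walk.support_cons] at hz ⊢
    rcases List.mem_cons.mp hz with rfl | hz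
    · exact hv ▸ List.mem_cons_self
    · exact List.mem_cons_of_mem _ (hr z hz)

end BipartiteDoubleCover

theorem neighborSet_comap_fst (G : SimpleGraph V) (x : V × S) :
    (G.comap Prod.fst).neighborSet x = G.neighborSet x.1 ×ˢ Set.univ := by
  ext y
  simp

def Hom.comapFstSection (G : SimpleGraph V) (σ : V → S) :
    G →g G.comap (Prod.fst : V × S → V) where
  toFun v := (v, σ v)
  map_rel' h := h

abbrev listBlowup (G : SimpleGraph V) (S : Type*) : SimpleGraph ((V ⊕ V) × S) :=
  G.bipartiteDoubleCover.comap Prod.fst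

def listBlowupProj (G : SimpleGraph V) (S : Type*) : G.listBlowup S →g G :=
  G.bipartiteDoubleCoverProj.comp (Hom.comap Prod.fst _)

section ListBlowup

variable {G : SimpleGraph V}

theorem listBlowup_colorable_two : (G.listBlowup S).Colorable 2 :=
  isBipartite_bipartiteDoubleCover.of_hom (Hom.comap Prod.fst _)

theorem ncard_neighborSet_listBlowup (x : (V ⊕ V) × S) :
    ((G.listBlowup S).neighborSet x).ncard =
      (G.neighborSet (G.listBlowupProj S x)).ncard * Nat.card S := by
  rw [neighborSet_comap_fst, Set.ncard_prod, Set.ncard_univ,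
    ncard_neighborSet_bipartiteDoubleCover]
  rfl

theorem exists_monoReach_listBlowup {U : Finset ℕ} {k : ℕ} (hU : 2 * k ≤ #U + 1)
    (hG : ¬ G.Colorable (#U * 2)) (c : (V ⊕ V) × U.powersetCard k → ℕ)
    (hc : ∀ x, c x ∈ x.2.1) :
    ∃ a b, MonoReach (G.listBlowup _) Set.univ c a b ∧
      G.girth / 2 ≤ (G.listBlowup _).dist a b := by
  choose ψ hψU A₁ A₂ hA₁ hA₂ using fun u : V => exists_common_value_of_mem hU
    (fun A => c (.inl u, A)) (fun A => c (.inr u, A)) (fun _ => hc _) (fun _ => hc _)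
  let σ : V ⊕ V → U.powersetCard k := Sum.elim A₁ A₂
  have hσ : ∀ v, c (v, σ v) = ψ (G.bipartiteDoubleCoverProj v) := by
    rintro (v | v)
    exacts [hA₁ v, hA₂ v]
  obtain ⟨x, cyc, hcyc, hmono⟩ := exists_isCycle_forall_apply_eq
    (fun u => (⟨ψ u, hψU u⟩ : U)) (by rwa [Fintype.card_coe])
  obtain ⟨v', r, hv', hr⟩ :=
    (cyc.take (G.girth / 2)).exists_lift_bipartiteDoubleCover (.inl x) rfl
  let rσ := r.map (Hom.comapFstSection _ σ)
  have hrσ : ∀ z ∈ rσ.support, c z = ψ x := by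
    intro z hz
    rw [Walk.support_map] at hz
    obtain ⟨w, hw, rfl⟩ := List.mem_map.mp hz
    have hw' := hr w hw
    rw [Walk.support_take] at hw'
    exact (hσ w).trans (congrArg Subtype.val (hmono _ (List.take_subset _ _ hw')))
  refine ⟨_, _, ⟨rσ, fun z hz => ⟨trivial, (hrσ z hz).trans (hrσ _ rσ.start_mem_support).symm⟩⟩,
    ?_⟩
  calc G.girth / 2 ≤ G.dist x (cyc.getVert (G.girth / 2)) := hcyc.le_dist_getVert (by omega)
    _ = G.dist (G.listBlowupProj _ (.inl x, σ (.inl x))) (G.listBlowupProj _ (v', σ v')) := by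
      rw [← hv']
      rfl
    _ ≤ _ := Reachable.dist_map_le _ ⟨rσ⟩

end ListBlowup

end SimpleGraph

theorem girth_chromatic_weak_diameter_construction_general (d g p k : ℕ)
    (hk : 0 < k)
    (hpk : 3 * k ^ (k + 1) ≤ p)
    (hexists : ∃ (W : Type) (_ : Fintype W) (H : SimpleGraph W),
      (∀ w, (H.neighborSet w).ncard = d) ∧
      (g : ℕ∞) ≤ H.girth ∧
      (p : ℕ∞) ≤ H.chromaticNumber) :
    ∃ (V : Type) (_ : Fintype V) (G : SimpleGraph V) (L : V → Finset ℕ),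
      G.Colorable 2 ∧
      MaxDegreeLE G (d * k ^ k) ∧
      (∀ x, (L x).Nonempty) ∧
      (∀ x, (L x).card = k) ∧
      ∀ c : V → ℕ, (∀ x, c x ∈ L x) →
        ∃ a b : V, MonoReach G Set.univ c a b ∧
          2 * ((g / 4 : ℕ) : ℤ) - 3 < (G.dist a b : ℤ) := by
  obtain ⟨W, _, H, hreg, hgirth, hchrom⟩ := hexists
  set U := range (2 * k - 1)
  have hU : #U = 2 * k - 1 := card_range _
  have hH : ¬ H.Colorable (#U * 2) := fun hcol => by
    have : p ≤ #U * 2 := by exact_mod_cast hchrom.trans hcol.chromaticNumber_le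
    have := Nat.two_mul_sub_one_mul_two_lt k hk
    omega
  refine ⟨(W ⊕ W) × U.powersetCard k, inferInstance, H.listBlowup _, fun x => x.2.1,
    listBlowup_colorable_two, fun x => ?_, fun x => ?_, fun x => (mem_powersetCard.mp x.2.2).2,
    fun c hc => ?_⟩
  · rw [ncard_neighborSet_listBlowup, hreg, Nat.card_eq_fintype_card, Fintype.card_coe,
      card_powersetCard, hU]
    exact Nat.mul_le_mul_left d (Nat.choose_two_mul_sub_one_le_pow_self k)
  · exact card_pos.mp (by rw [(mem_powersetCard.mp x.2.2).2]; exact hk)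
  · obtain ⟨a, b, hab, hdist⟩ := exists_monoReach_listBlowup (by omega) hH c hc
    have : g ≤ H.girth := by exact_mod_cast hgirth
    exact ⟨a, b, hab, by omega⟩

/-- **Lemma.** Let `d, g, p, k` be positive integers with `p ≥ 3k^{k+1}` and `g ≥ 4`.
If there exists a `d`-regular graph with girth at least `g` and chromatic number at
least `p`, then there exist a bipartite graph `G` with maximum degree at most `d·k^k`
and a `k`-list-assignment `L` of `G` such that every `L`-coloring of `G` has a
monochromatic component whose vertex set has weak diameter in `G` greater than
`2⌊g/4⌋ − 3`. -/
theorem girth_chromatic_weak_diameter_construction (d g p k : ℕ)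
    (hd : 0 < d) (hg : 4 ≤ g) (hp : 0 < p) (hk : 0 < k)
    (hpk : 3 * k ^ (k + 1) ≤ p)
    (hexists : ∃ (W : Type) (_ : Fintype W) (H : SimpleGraph W),
      (∀ w, (H.neighborSet w).ncard = d) ∧
      (g : ℕ∞) ≤ H.girth ∧
      (p : ℕ∞) ≤ H.chromaticNumber) :
    ∃ (V : Type) (_ : Fintype V) (G : SimpleGraph V) (L : V → Finset ℕ),
      G.Colorable 2 ∧
      MaxDegreeLE G (d * k ^ k) ∧
      (∀ x, (L x).Nonempty) ∧
      (∀ x, (L x).card = k) ∧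
      ∀ c : V → ℕ, (∀ x, c x ∈ L x) →
        ∃ a b : V, MonoReach G Set.univ c a b ∧
          2 * ((g / 4 : ℕ) : ℤ) - 3 < (G.dist a b : ℤ) :=
  girth_chromatic_weak_diameter_construction_general d g p k hk hpk hexists
end
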